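/- Let P be the antilinear-free parity operator on (ℂ²)^{⊗M} defined on product basis vectors by P|ε₁,...,ε_M⟩ = |ε_M,...,ε₁⟩, and let T be the antilinear time-reversal operator fixing all product basis vectors (complex conjugation in this basis). If H(α,β) is the XX Hamiltonian with boundary fields α, β, then P H(α,β) P = H(β,α) and T H(α,β) T = H(conj(α), conj(β)). Consequently, when α = conj(β), H commutes with the antilinear operator PT. -/
import Mathlib


/-- Spin configurations of a chain with `n+1` sites: `0 ↔ v₊` (spin up,
`ε = +1`), `1 ↔ v₋` (spin down, `ε = −1`). -/
abbrev SpinConf (n : ℕ) := Fin (n + 1) → Fin 2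

/-- The Pauli matrix `σ^x` at site `m`, as a matrix on `(ℂ²)^{⊗(n+1)}` in the
product spin basis. -/
def sigmaX (n : ℕ) (m : Fin (n + 1)) : Matrix (SpinConf n) (SpinConf n) ℂ :=
  Matrix.of fun ε ε' => if ε = Function.update ε' m (1 - ε' m) then 1 else 0

/-- The Pauli matrix `σ^y` at site `m`. -/
def sigmaY (n : ℕ) (m : Fin (n + 1)) : Matrix (SpinConf n) (SpinConf n) ℂ :=
  Matrix.of fun ε ε' =>
    if ε = Function.update ε' m (1 - ε' m) then
      (if ε' m = 0 then Complex.I else -Complex.I) else 0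

/-- The Pauli matrix `σ^z` at site `m`. -/
def sigmaZ (n : ℕ) (m : Fin (n + 1)) : Matrix (SpinConf n) (SpinConf n) ℂ :=
  Matrix.of fun ε ε' => if ε = ε' then (if ε m = 0 then 1 else -1) else 0

/-- The XX Hamiltonian with boundary fields `α, β` on a chain with `M = n+1`
sites: `H = ½ ∑_{m=1}^{M−1} (σ_m^x σ_{m+1}^x + σ_m^y σ_{m+1}^y)
+ (α σ₁^z + β σ_M^z)/2`. -/
noncomputable def XXHam (n : ℕ) (α β : ℂ) : Matrix (SpinConf n) (SpinConf n) ℂ :=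
  (1 / 2 : ℂ) •
    ((∑ m : Fin n, (sigmaX n m.castSucc * sigmaX n m.succ
        + sigmaY n m.castSucc * sigmaY n m.succ))
      + α • sigmaZ n 0 + β • sigmaZ n (Fin.last n))

/-- The parity operator `P|ε₁,...,ε_M⟩ = |ε_M,...,ε₁⟩`. -/
def parityOp (n : ℕ) : Matrix (SpinConf n) (SpinConf n) ℂ :=
  Matrix.of fun ε ε' => if ε = (fun j => ε' j.rev) then 1 else 0

namespace PTaux

/-- Site-reversal on spin configurations. -/
def R (n : ℕ) (ε : SpinConf n) : SpinConf n := fun j => ε j.rev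

lemma R_R (n : ℕ) (ε : SpinConf n) : R n (R n ε) = ε := by
  funext j; simp [R, Fin.rev_rev]

lemma R_inj (n : ℕ) {ε ε' : SpinConf n} (h : R n ε = R n ε') : ε = ε' := by
  have := congrArg (R n) h; rwa [R_R, R_R] at this

lemma R_eq_iff (n : ℕ) {ε ε' : SpinConf n} : R n ε = ε' ↔ ε = R n ε' := by
  constructor
  · rintro rfl; rw [R_R]
  · rintro rfl; rw [R_R]

lemma R_update (n : ℕ) (ε : SpinConf n) (k : Fin (n+1)) (v : Fin 2) :
    R n (Function.update ε k v) = Function.update (R n ε) k.rev v := by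
  funext j
  by_cases h : j = k.rev
  · subst h
    simp [R, Function.update, Fin.rev_rev]
  · have h2 : j.rev ≠ k := by
      intro hc; apply h; rw [← hc, Fin.rev_rev]
    simp [R, Function.update, h, h2]

/-- Generic one-site spin-flip operator; `sigmaX` and `sigmaY` are instances. -/
def locOp (n : ℕ) (m : Fin (n + 1)) (c : Fin 2 → ℂ) :
    Matrix (SpinConf n) (SpinConf n) ℂ :=
  Matrix.of fun ε ε' => if ε = Function.update ε' m (1 - ε' m) then c (ε' m) else 0

lemma sigmaX_eq (n : ℕ) (m : Fin (n+1)) : sigmaX n m = locOp n m (fun _ => 1) := rfl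

lemma sigmaY_eq (n : ℕ) (m : Fin (n+1)) :
    sigmaY n m = locOp n m (fun v => if v = 0 then Complex.I else -Complex.I) := rfl

lemma locOp_mul_apply (n : ℕ) (i j : Fin (n+1)) (c d : Fin 2 → ℂ)
    (ε ε' : SpinConf n) :
    (locOp n i c * locOp n j d) ε ε'
      = (if ε = Function.update (Function.update ε' j (1 - ε' j)) i
            (1 - (Function.update ε' j (1 - ε' j)) i)
          then c ((Function.update ε' j (1 - ε' j)) i) else 0) * d (ε' j) := by
  rw [Matrix.mul_apply]
  have : ∀ δ : SpinConf n,
      locOp n i c ε δ * locOp n j d δ ε'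
        = if δ = Function.update ε' j (1 - ε' j) then
            (if ε = Function.update δ i (1 - δ i) then c (δ i) else 0) * d (ε' j)
          else 0 := by
    intro δ
    by_cases h : δ = Function.update ε' j (1 - ε' j) <;> simp [locOp, h]
  simp only [this, Finset.sum_ite_eq', Finset.mem_univ, if_true]

lemma locOp_comm (n : ℕ) {i j : Fin (n+1)} (h : i ≠ j) (c d : Fin 2 → ℂ) :
    locOp n i c * locOp n j d = locOp n j d * locOp n i c := by
  ext ε ε'
  rw [locOp_mul_apply, locOp_mul_apply]
  rw [Function.update_of_ne h, Function.update_of_ne h.symm,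
    Function.update_comm h]
  by_cases hc : ε = Function.update (Function.update ε' j (1 - ε' j)) i (1 - ε' i)
  · simp [hc]; ring
  · simp [hc]

lemma parity_conj_apply (n : ℕ) (A : Matrix (SpinConf n) (SpinConf n) ℂ)
    (ε ε' : SpinConf n) :
    (parityOp n * A * parityOp n) ε ε' = A (R n ε) (R n ε') := by
  rw [Matrix.mul_apply]
  have h1 : ∀ δ : SpinConf n,
      (parityOp n * A) ε δ * parityOp n δ ε'
        = if δ = R n ε' then (parityOp n * A) ε δ else 0 := by
    intro δ
    have : parityOp n δ ε' = if δ = R n ε' then 1 else 0 := rfl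
    rw [this]
    by_cases h : δ = R n ε' <;> simp [h]
  simp only [h1, Finset.sum_ite_eq', Finset.mem_univ, if_true]
  rw [Matrix.mul_apply]
  have h2 : ∀ δ : SpinConf n,
      parityOp n ε δ * A δ (R n ε')
        = if δ = R n ε then A δ (R n ε') else 0 := by
    intro δ
    have : parityOp n ε δ = if ε = R n δ then 1 else 0 := rfl
    rw [this]
    by_cases h : δ = R n ε
    · subst h; rw [if_pos (by rw [R_R]), if_pos rfl, one_mul]
    · rw [if_neg (fun hc => h (by rw [hc, R_R])), if_neg h, zero_mul]
  simp only [h2, Finset.sum_ite_eq', Finset.mem_univ, if_true]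

lemma parity_locOp (n : ℕ) (m : Fin (n+1)) (c : Fin 2 → ℂ) :
    parityOp n * locOp n m c * parityOp n = locOp n m.rev c := by
  ext ε ε'
  rw [parity_conj_apply]
  show (if R n ε = Function.update (R n ε') m (1 - (R n ε') m) then c ((R n ε') m) else 0)
      = (if ε = Function.update ε' m.rev (1 - ε' m.rev) then c (ε' m.rev) else 0)
  have hval : (R n ε') m = ε' m.rev := rfl
  have hcond : (R n ε = Function.update (R n ε') m (1 - (R n ε') m))
      ↔ (ε = Function.update ε' m.rev (1 - ε' m.rev)) := by
    rw [hval]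
    constructor
    · intro h
      have := congrArg (R n) h
      rwa [R_R, R_update, R_R] at this
    · intro h
      rw [h, R_update, Fin.rev_rev]
  by_cases h : ε = Function.update ε' m.rev (1 - ε' m.rev)
  · rw [if_pos (hcond.mpr h), if_pos h, hval]
  · rw [if_neg (fun hc => h (hcond.mp hc)), if_neg h]

lemma parity_sigmaX (n : ℕ) (m : Fin (n+1)) :
    parityOp n * sigmaX n m * parityOp n = sigmaX n m.rev := by
  rw [sigmaX_eq, sigmaX_eq, parity_locOp]

lemma parity_sigmaY (n : ℕ) (m : Fin (n+1)) :
    parityOp n * sigmaY n m * parityOp n = sigmaY n m.rev := by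
  rw [sigmaY_eq, sigmaY_eq, parity_locOp]

lemma parity_sigmaZ (n : ℕ) (m : Fin (n+1)) :
    parityOp n * sigmaZ n m * parityOp n = sigmaZ n m.rev := by
  ext ε ε'
  rw [parity_conj_apply]
  show (if R n ε = R n ε' then (if (R n ε) m = 0 then 1 else -1) else 0)
      = (if ε = ε' then (if ε m.rev = 0 then (1:ℂ) else -1) else 0)
  have : (R n ε = R n ε') ↔ (ε = ε') := ⟨R_inj n, fun h => by rw [h]⟩
  have hval : (R n ε) m = ε m.rev := rfl
  rw [hval]
  by_cases h : ε = ε'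
  · rw [if_pos (this.mpr h), if_pos h]
  · rw [if_neg (fun hc => h (this.mp hc)), if_neg h]

lemma parity_sq (n : ℕ) : parityOp n * parityOp n = 1 := by
  have := parity_conj_apply n 1
  ext ε ε'
  have h : parityOp n * parityOp n = parityOp n * 1 * parityOp n := by
    rw [mul_one]
  rw [h, parity_conj_apply]
  show (if R n ε = R n ε' then (1:ℂ) else 0) = _
  have hiff : (R n ε = R n ε') ↔ (ε = ε') := ⟨R_inj n, fun h => by rw [h]⟩
  by_cases h2 : ε = ε'
  · rw [if_pos (hiff.mpr h2)]; simp [h2, Matrix.one_apply]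
  · rw [if_neg (fun hc => h2 (hiff.mp hc))]; simp [h2, Matrix.one_apply]

lemma parity_conj_mul (n : ℕ) (A B : Matrix (SpinConf n) (SpinConf n) ℂ) :
    parityOp n * (A * B) * parityOp n
      = (parityOp n * A * parityOp n) * (parityOp n * B * parityOp n) := by
  have : (parityOp n * A * parityOp n) * (parityOp n * B * parityOp n)
      = parityOp n * A * (parityOp n * parityOp n) * B * parityOp n := by
    noncomm_ring
  rw [this, parity_sq, mul_one]
  noncomm_ring

lemma sigmaX_map (n : ℕ) (m : Fin (n+1)) :
    (sigmaX n m).map (starRingEnd ℂ) = sigmaX n m := by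
  ext ε ε'
  simp [sigmaX, Matrix.map_apply, apply_ite (starRingEnd ℂ)]

lemma sigmaY_map (n : ℕ) (m : Fin (n+1)) :
    (sigmaY n m).map (starRingEnd ℂ) = -sigmaY n m := by
  ext ε ε'
  simp only [sigmaY, Matrix.map_apply, Matrix.neg_apply, Matrix.of_apply]
  split_ifs <;> simp

lemma sigmaZ_map (n : ℕ) (m : Fin (n+1)) :
    (sigmaZ n m).map (starRingEnd ℂ) = sigmaZ n m := by
  ext ε ε'
  simp [sigmaZ, Matrix.map_apply, apply_ite (starRingEnd ℂ)]

lemma parity_XXHam (n : ℕ) (α β : ℂ) :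
    parityOp n * XXHam n α β * parityOp n = XXHam n β α := by
  unfold XXHam
  rw [Matrix.mul_smul, Matrix.smul_mul]
  congr 1
  rw [mul_add, add_mul, mul_add, add_mul,
    Matrix.mul_smul, Matrix.smul_mul, Matrix.mul_smul, Matrix.smul_mul,
    parity_sigmaZ, parity_sigmaZ, Fin.rev_zero, Fin.rev_last,
    Matrix.mul_sum, Matrix.sum_mul]
  have hsum : ∑ m : Fin n,
      (parityOp n * (sigmaX n m.castSucc * sigmaX n m.succ
        + sigmaY n m.castSucc * sigmaY n m.succ)) * parityOp n
      = ∑ m : Fin n, (sigmaX n m.castSucc * sigmaX n m.succ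
        + sigmaY n m.castSucc * sigmaY n m.succ) := by
    have hterm : ∀ m : Fin n,
        (parityOp n * (sigmaX n m.castSucc * sigmaX n m.succ
          + sigmaY n m.castSucc * sigmaY n m.succ)) * parityOp n
        = sigmaX n m.rev.castSucc * sigmaX n m.rev.succ
          + sigmaY n m.rev.castSucc * sigmaY n m.rev.succ := by
      intro m
      have hne : (m.rev.succ : Fin (n+1)) ≠ m.rev.castSucc := by
        simp [Fin.ext_iff, Fin.val_succ]
      rw [mul_add, add_mul, parity_conj_mul, parity_conj_mul,
        parity_sigmaX, parity_sigmaX, parity_sigmaY, parity_sigmaY,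
        Fin.rev_castSucc, Fin.rev_succ,
        sigmaX_eq, sigmaX_eq, sigmaY_eq, sigmaY_eq,
        locOp_comm n hne, locOp_comm n hne]
    simp only [hterm]
    exact Fintype.sum_equiv Fin.revPerm _ _ (fun m => by simp [Fin.revPerm])
  rw [hsum]
  abel

lemma map_smul' (n : ℕ) (c : ℂ) (A : Matrix (SpinConf n) (SpinConf n) ℂ) :
    (c • A).map (starRingEnd ℂ) = (starRingEnd ℂ) c • A.map (starRingEnd ℂ) := by
  ext ε ε'
  simp [Matrix.map_apply]

lemma map_sum' (n : ℕ) (f : Fin n → Matrix (SpinConf n) (SpinConf n) ℂ) :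
    (∑ m, f m).map (starRingEnd ℂ) = ∑ m, (f m).map (starRingEnd ℂ) := by
  ext ε ε'
  simp [Matrix.map_apply, Matrix.sum_apply]

lemma map_XXHam (n : ℕ) (α β : ℂ) :
    (XXHam n α β).map (starRingEnd ℂ)
      = XXHam n ((starRingEnd ℂ) α) ((starRingEnd ℂ) β) := by
  unfold XXHam
  rw [map_smul', Matrix.map_add _ (map_add _), Matrix.map_add _ (map_add _),
    map_smul', map_smul', sigmaZ_map, sigmaZ_map, map_sum']
  have hhalf : (starRingEnd ℂ) (1/2 : ℂ) = 1/2 := by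
    rw [map_div₀, map_one, map_ofNat]
  have hterm : ∀ m : Fin n,
      (sigmaX n m.castSucc * sigmaX n m.succ
        + sigmaY n m.castSucc * sigmaY n m.succ).map (starRingEnd ℂ)
      = sigmaX n m.castSucc * sigmaX n m.succ
        + sigmaY n m.castSucc * sigmaY n m.succ := by
    intro m
    rw [Matrix.map_add _ (map_add _), Matrix.map_mul, Matrix.map_mul,
      sigmaX_map, sigmaX_map, sigmaY_map, sigmaY_map, neg_mul_neg]
  simp only [hterm, hhalf]

end PTaux

/-- `P H(α,β) P = H(β,α)`; time reversal (entrywise complex conjugation in the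
spin basis) sends `H(α,β)` to `H(conj α, conj β)`; consequently for
`α = conj β` the Hamiltonian commutes with the antilinear operator `PT`,
i.e. `P ∘ conj` intertwines `H` with itself: `P H̄ = H P`. -/


theorem XXHam_PT_symmetry (n : ℕ) (α β : ℂ) :
    parityOp n * XXHam n α β * parityOp n = XXHam n β α ∧
    (XXHam n α β).map (starRingEnd ℂ)
      = XXHam n ((starRingEnd ℂ) α) ((starRingEnd ℂ) β) ∧
    (α = (starRingEnd ℂ) β →
      parityOp n * (XXHam n α β).map (starRingEnd ℂ)
        = XXHam n α β * parityOp n) := by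
  refine ⟨PTaux.parity_XXHam n α β, PTaux.map_XXHam n α β, ?_⟩
  intro h
  have hα : (starRingEnd ℂ) α = β := by rw [h, Complex.conj_conj]
  have hβ : (starRingEnd ℂ) β = α := h.symm
  rw [PTaux.map_XXHam, hα, hβ]
  have h1 := PTaux.parity_XXHam n β α
  calc parityOp n * XXHam n β α
      = parityOp n * XXHam n β α * (parityOp n * parityOp n) := by
        rw [PTaux.parity_sq, mul_one]
    _ = (parityOp n * XXHam n β α * parityOp n) * parityOp n := by
        noncomm_ring
    _ = XXHam n α β * parityOp n := by rw [h1]
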